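/- arXiv:2410.09537 — 2 statements merged into one kernel-verified Lean document; each statement's English description precedes it below -/
import Mathlib

section
/- For the scalar linear ODE ż = λz, the composition of two ALF steps each with step size h/2 (the ALF2 method), initialized with v₀ = λz₀, produces a velocity component v₂ that approximates the exact velocity λz₀e^{λh} with error O(h³), i.e., ALF2 is second-order accurate in the velocity variable. -/
/-- One ALF step of size `s` for the scalar linear ODE `ż = λz`. -/
noncomputable def alfStep (lam s : ℝ) (p : ℝ × ℝ) : ℝ × ℝ :=
  (p.1 + s * (lam * (p.1 + (s / 2) * p.2)),
   2 * lam * (p.1 + (s / 2) * p.2) - p.2)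

/-- For `ż = λz`, the composition of two ALF steps with step size `h/2` (ALF2),
initialized with `v₀ = λz₀`, produces a velocity `v₂` approximating the exact
velocity `λ z₀ e^{λh}` with error `O(h³)`. -/
theorem alf2_linear_velocity_second_order (lam z₀ : ℝ) :
    ∃ C : ℝ, ∃ δ > (0 : ℝ), ∀ h : ℝ, |h| ≤ δ →
      |(alfStep lam (h / 2) (alfStep lam (h / 2) (z₀, lam * z₀))).2
        - lam * z₀ * Real.exp (lam * h)| ≤ C * |h| ^ 3 := by
  refine ⟨|lam * z₀| * |lam| ^ 3, 1 / (|lam| + 1), by positivity, fun h hh => ?_⟩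
  have hlam1 : (0:ℝ) < |lam| + 1 := by positivity
  have hx1 : |lam * h| ≤ 1 := by
    rw [abs_mul]
    calc |lam| * |h| ≤ |lam| * (1 / (|lam| + 1)) := by
          exact mul_le_mul_of_nonneg_left hh (abs_nonneg _)
      _ ≤ 1 := by rw [mul_one_div, div_le_one hlam1]; linarith
  have hb := Real.exp_bound hx1 (n := 3) (by norm_num)
  have hsum : ∑ m ∈ Finset.range 3, (lam * h) ^ m / m.factorial
      = 1 + lam * h + (lam * h) ^ 2 / 2 := by
    simp [Finset.sum_range_succ, Nat.factorial]
  rw [hsum] at hb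
  have key : (alfStep lam (h / 2) (alfStep lam (h / 2) (z₀, lam * z₀))).2
      = lam * z₀ * (1 + lam * h + (lam * h) ^ 2 / 2) := by
    simp only [alfStep]
    ring
  rw [key]
  have : lam * z₀ * (1 + lam * h + (lam * h) ^ 2 / 2) - lam * z₀ * Real.exp (lam * h)
      = -(lam * z₀) * (Real.exp (lam * h) - (1 + lam * h + (lam * h) ^ 2 / 2)) := by ring
  rw [this, abs_mul, abs_neg]
  calc |lam * z₀| * |Real.exp (lam * h) - (1 + lam * h + (lam * h) ^ 2 / 2)|
      ≤ |lam * z₀| * (|lam * h| ^ 3 * ((3:ℕ).succ / ((3:ℕ).factorial * 3))) :=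
        mul_le_mul_of_nonneg_left hb (abs_nonneg _)
    _ ≤ |lam * z₀| * |lam| ^ 3 * |h| ^ 3 := by
        rw [abs_mul, abs_mul lam h, mul_pow]
        have hc : ((Nat.succ 3 : ℝ) / ((Nat.factorial 3 : ℝ) * 3)) ≤ 1 := by
          norm_num [Nat.factorial]
        nlinarith [abs_nonneg lam, abs_nonneg z₀, abs_nonneg h,
          pow_nonneg (abs_nonneg lam) 3, pow_nonneg (abs_nonneg h) 3,
          mul_nonneg (mul_nonneg (abs_nonneg lam) (abs_nonneg z₀))
            (mul_nonneg (pow_nonneg (abs_nonneg lam) 3) (pow_nonneg (abs_nonneg h) 3))]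
end

section
/- For the scalar linear ODE ż = λz, the Yoshida-composed method Y4 (composition of ALF2 steps with step sizes ah, bh, ah where a = 1/(2 − 2^{1/3}), b = 1 − 2a), initialized with v₀ = λz₀, produces a position z_out whose Taylor expansion in h agrees with z₀e^{λh} through order h⁴, i.e., |z_out − z₀e^{λh}| = O(h⁵). -/
/-- ALF2 with step `s`: two ALF steps of size `s/2`. -/
noncomputable def alf2 (lam s : ℝ) (p : ℝ × ℝ) : ℝ × ℝ :=
  alfStep lam (s / 2) (alfStep lam (s / 2) p)

open Asymptotics Filter Finset Topology

-- The `x⁵`-coefficient of Y4's output at `x = λh`, after eliminating `b = 1 - 2a`.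
noncomputable def y4Remainder (a x : ℝ) : ℝ :=
  a / 24 - a ^ 2 / 16 - x / 144 + x * a / 24 - x * a ^ 2 / 16
    - x ^ 2 / 384 + x ^ 2 * a / 72 - x ^ 2 * a ^ 2 / 48

lemma y4_fst_eq_taylor_add {a b : ℝ} (hab : 2 * a + b = 1) (hcubic : 2 * a ^ 3 + b ^ 3 = 0)
    (lam z₀ h : ℝ) :
    (alf2 lam (a * h) (alf2 lam (b * h) (alf2 lam (a * h) (z₀, lam * z₀)))).1
      = z₀ * (∑ i ∈ range 5, (lam * h) ^ i / i.factorial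
          + (lam * h) ^ 5 * y4Remainder a (lam * h)) := by
  obtain rfl : b = 1 - 2 * a := by linarith
  simp only [alf2, alfStep, y4Remainder, sum_range_succ, sum_range_zero, Nat.factorial]
  push_cast
  linear_combination (z₀ * ((-1/24 : ℝ) * lam^3 * h^3 + (-1/24 : ℝ) * lam^4 * h^4 +
    (-1/24 : ℝ) * lam^5 * h^5 * a + (1/16 : ℝ) * lam^5 * h^5 * a^2 +
    (1/144 : ℝ) * lam^6 * h^6 + (-1/48 : ℝ) * lam^6 * h^6 * a^2 +
    (1/24 : ℝ) * lam^6 * h^6 * a^3 + (1/384 : ℝ) * lam^7 * h^7 +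
    (1/576 : ℝ) * lam^7 * h^7 * a + (-1/192 : ℝ) * lam^7 * h^7 * a^3 +
    (1/96 : ℝ) * lam^7 * h^7 * a^4)) * hcubic

lemma yoshida_cubic_of_cube_eq_two {c : ℝ} (hc : c ^ 3 = 2) :
    2 * (1 / (2 - c)) ^ 3 + (1 - 2 * (1 / (2 - c))) ^ 3 = 0 := by
  have hne : 2 - c ≠ 0 := by
    rintro h
    obtain rfl : c = 2 := by linarith
    norm_num at hc
  field_simp
  linear_combination (-1 : ℝ) * hc

lemma rpow_one_third_cube_eq (x : ℝ) (hx : 0 ≤ x) : (x ^ ((1 : ℝ) / 3)) ^ 3 = x := by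
  simpa using Real.rpow_inv_natCast_pow hx (n := 3) (by norm_num)

lemma taylor_add_pow_mul_sub_exp_isBigO (R : ℝ → ℝ) (hR : Continuous R) (n : ℕ) :
    (fun x : ℝ ↦ ∑ i ∈ range n, x ^ i / i.factorial + x ^ n * R x - Real.exp x)
      =O[𝓝 0] (· ^ n) := by
  have hRbdd : R =O[𝓝 0] (fun _ ↦ (1 : ℝ)) := (hR.tendsto 0).isBigO_one ℝ
  have hmul : (fun x ↦ x ^ n * R x) =O[𝓝 0] (· ^ n) := by
    simpa using (isBigO_refl (· ^ n) (𝓝 (0 : ℝ))).mul hRbdd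
  refine (hmul.sub (Real.exp_sub_sum_range_isBigO_pow n)).congr_left fun x ↦ ?_
  ring

lemma y4_error_isBigO {a b : ℝ} (hab : 2 * a + b = 1) (hcubic : 2 * a ^ 3 + b ^ 3 = 0)
    (lam z₀ : ℝ) :
    (fun h ↦ (alf2 lam (a * h) (alf2 lam (b * h) (alf2 lam (a * h) (z₀, lam * z₀)))).1
        - z₀ * Real.exp (lam * h)) =O[𝓝 0] (· ^ 5) := by
  have hscale : Tendsto (fun h : ℝ ↦ lam * h) (𝓝 0) (𝓝 0) := by
    simpa using (continuous_const_mul lam).tendsto 0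
  have hcomp := (taylor_add_pow_mul_sub_exp_isBigO (y4Remainder a)
    (by unfold y4Remainder; fun_prop) 5).comp_tendsto hscale
  have hpow : (fun h : ℝ ↦ (lam * h) ^ 5) =O[𝓝 0] (· ^ 5) := by
    simpa only [mul_pow] using (isBigO_refl (· ^ 5) (𝓝 (0 : ℝ))).const_mul_left (lam ^ 5)
  refine ((hcomp.trans hpow).const_mul_left z₀).congr_left fun h ↦ ?_
  simp only [Function.comp_apply, y4_fst_eq_taylor_add hab hcubic]
  ring

lemma exists_bound_of_isBigO_nhds_zero {f g : ℝ → ℝ} (hfg : f =O[𝓝 0] g) :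
    ∃ C : ℝ, ∃ δ > (0 : ℝ), ∀ h : ℝ, |h| ≤ δ → |f h| ≤ C * |g h| := by
  obtain ⟨C, hC⟩ := hfg.bound
  obtain ⟨δ, hδ, hball⟩ := Metric.nhds_basis_closedBall.eventually_iff.mp hC
  exact ⟨C, δ, hδ, fun h hh ↦ hball (by simpa using hh)⟩

/-- For `ż = λz`, the Yoshida-composed method Y4 (ALF2 steps with step sizes
`ah`, `bh`, `ah`, where `a = 1/(2 − 2^{1/3})`, `b = 1 − 2a`), initialized with
`v₀ = λz₀`, produces a position agreeing with `z₀ e^{λh}` through order `h⁴`,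
i.e. the error is `O(h⁵)`. -/
theorem y4_linear_fourth_order (lam z₀ : ℝ) :
    let a : ℝ := 1 / (2 - (2 : ℝ) ^ ((1 : ℝ) / 3))
    let b : ℝ := 1 - 2 * a
    ∃ C : ℝ, ∃ δ > (0 : ℝ), ∀ h : ℝ, |h| ≤ δ →
      |(alf2 lam (a * h) (alf2 lam (b * h) (alf2 lam (a * h) (z₀, lam * z₀)))).1
        - z₀ * Real.exp (lam * h)| ≤ C * |h| ^ 5 := by
  intro a b
  have hcubic : 2 * a ^ 3 + b ^ 3 = 0 :=
    yoshida_cubic_of_cube_eq_two (rpow_one_third_cube_eq 2 zero_le_two)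
  obtain ⟨C, δ, hδ, hbound⟩ :=
    exists_bound_of_isBigO_nhds_zero (y4_error_isBigO (by ring) hcubic lam z₀)
  exact ⟨C, δ, hδ, fun h hh ↦ by simpa only [abs_pow] using hbound h hh⟩
end
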